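/- arXiv:2008.02737 — 3 statements merged into one kernel-verified Lean document; each statement's English description precedes it below -/
import Mathlib

section
/- Let p ≥ d and let S* ∈ St(d,p)^n be a second-order critical point of f such that the p×(dn) matrix S* has rank strictly less than p. Then S* is a global minimizer of f over St(d,p)^n, and Z* = S*ᵀ·S* is a global minimizer of the SDP. -/
open Matrix BigOperators

noncomputable section

/-- `SO(k)`: real special orthogonal `k × k` matrices. -/
def SOset (k : ℕ) : Set (Matrix (Fin k) (Fin k) ℝ) :=
  {Q | Qᵀ * Q = 1 ∧ Q.det = 1}

/-- The Stiefel manifold `St(d,p)`: real `p × d` matrices with orthonormal columns. -/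
def StiefelSet (d p : ℕ) : Set (Matrix (Fin p) (Fin d) ℝ) :=
  {Y | Yᵀ * Y = 1}

/-- Assemble an `n`-tuple of `p × d` blocks into a `p × (dn)` matrix. -/
def flatten {n d p : ℕ} (S : Fin n → Matrix (Fin p) (Fin d) ℝ) :
    Matrix (Fin p) (Fin n × Fin d) ℝ :=
  fun a ib => S ib.1 a ib.2

/-- The `i`-th block column of a `p × (dn)` matrix. -/
def blockCol {n d p : ℕ} (M : Matrix (Fin p) (Fin n × Fin d) ℝ) (i : Fin n) :
    Matrix (Fin p) (Fin d) ℝ :=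
  fun a b => M a (i, b)

/-- Membership of all block columns in `St(d,p)`, i.e. `S ∈ St(d,p)^n`. -/
def StProdFeas {n d p : ℕ} (M : Matrix (Fin p) (Fin n × Fin d) ℝ) : Prop :=
  ∀ i : Fin n, blockCol M i ∈ StiefelSet d p

/-- The connection Laplacian of the measurements `(E, κ, Rbar)`. -/
def connLap {n d : ℕ} (E : Finset (Fin n × Fin n)) (κ : Fin n × Fin n → ℝ)
    (Rbar : Fin n × Fin n → Matrix (Fin d) (Fin d) ℝ) :
    Matrix (Fin n × Fin d) (Fin n × Fin d) ℝ :=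
  fun x y =>
    if x.1 = y.1 then
      (∑ j : Fin n, ((if (x.1, j) ∈ E then κ (x.1, j) else 0) +
          (if (j, x.1) ∈ E then κ (j, x.1) else 0))) *
        (if x.2 = y.2 then (1 : ℝ) else 0)
    else if (x.1, y.1) ∈ E then -κ (x.1, y.1) * Rbar (x.1, y.1) x.2 y.2
    else if (y.1, x.1) ∈ E then -κ (y.1, x.1) * Rbar (y.1, x.1) y.2 x.2
    else 0

/-- SDP feasibility: positive semidefinite with identity diagonal `d × d` blocks. -/
def SDPFeasible {n d : ℕ} (Z : Matrix (Fin n × Fin d) (Fin n × Fin d) ℝ) : Prop :=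
  Z.PosSemidef ∧ ∀ (i : Fin n) (a b : Fin d), Z (i, a) (i, b) = if a = b then (1 : ℝ) else 0

/-- The objective `f(S) = trace (L Sᵀ S)`. -/
def fObj {n d p : ℕ} (L : Matrix (Fin n × Fin d) (Fin n × Fin d) ℝ)
    (S : Matrix (Fin p) (Fin n × Fin d) ℝ) : ℝ :=
  (L * (Sᵀ * S)).trace

/-- The `p × d` matrix `P = [I_d ; 0]`. -/
def Pmat (d p : ℕ) : Matrix (Fin p) (Fin d) ℝ :=
  fun a b => if (a : ℕ) = (b : ℕ) then 1 else 0

/-- The projection `Π : SO(p)^n → St(d,p)^n`, as a `p × (dn)` matrix. -/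
def bigProj {n d p : ℕ} (Q : Fin n → Matrix (Fin p) (Fin p) ℝ) :
    Matrix (Fin p) (Fin n × Fin d) ℝ :=
  flatten (fun i => Q i * Pmat d p)

/-- First-order criticality of `f` on `St(d,p)^n`: along every (componentwise) `C¹` curve
through `S` in `St(d,p)^n`, the derivative of `f ∘ γ` vanishes at `0`. -/
def IsCriticalSt {n d p : ℕ} (L : Matrix (Fin n × Fin d) (Fin n × Fin d) ℝ)
    (S : Matrix (Fin p) (Fin n × Fin d) ℝ) : Prop :=
  ∀ γ : ℝ → Matrix (Fin p) (Fin n × Fin d) ℝ,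
    (∀ a ib, ContDiff ℝ 1 fun t => γ t a ib) → (∀ t, StProdFeas (γ t)) → γ 0 = S →
    deriv (fun t => fObj L (γ t)) 0 = 0

/-- Second-order criticality of `f` on `St(d,p)^n`. -/
def IsSecondOrderCriticalSt {n d p : ℕ} (L : Matrix (Fin n × Fin d) (Fin n × Fin d) ℝ)
    (S : Matrix (Fin p) (Fin n × Fin d) ℝ) : Prop :=
  IsCriticalSt L S ∧
  ∀ γ : ℝ → Matrix (Fin p) (Fin n × Fin d) ℝ,
    (∀ a ib, ContDiff ℝ 2 fun t => γ t a ib) → (∀ t, StProdFeas (γ t)) → γ 0 = S →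
    0 ≤ iteratedDeriv 2 (fun t => fObj L (γ t)) 0

/-- First-order criticality of the Shonan objective `g = f ∘ Π` on `SO(p)^n`. -/
def IsCriticalSO {n d p : ℕ} (L : Matrix (Fin n × Fin d) (Fin n × Fin d) ℝ)
    (Q : Fin n → Matrix (Fin p) (Fin p) ℝ) : Prop :=
  ∀ γ : ℝ → (Fin n → Matrix (Fin p) (Fin p) ℝ),
    (∀ i a b, ContDiff ℝ 1 fun t => γ t i a b) → (∀ t i, γ t i ∈ SOset p) → γ 0 = Q →
    deriv (fun t => fObj L (bigProj (γ t))) 0 = 0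

/-- `SymBlockDiag`: zero out all entries outside the `n` diagonal `d × d` blocks. -/
def symBlockDiag {n d : ℕ} (M : Matrix (Fin n × Fin d) (Fin n × Fin d) ℝ) :
    Matrix (Fin n × Fin d) (Fin n × Fin d) ℝ :=
  fun x y => if x.1 = y.1 then M x y else 0

/-- The certificate matrix `C = L − (1/2)·SymBlockDiag(L SᵀS + SᵀS L)`. -/
def certMat {n d p : ℕ} (L : Matrix (Fin n × Fin d) (Fin n × Fin d) ℝ)
    (S : Matrix (Fin p) (Fin n × Fin d) ℝ) :
    Matrix (Fin n × Fin d) (Fin n × Fin d) ℝ :=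
  L - (1 / 2 : ℝ) • symBlockDiag (L * (Sᵀ * S) + (Sᵀ * S) * L)

/-- The spectral norm (ℓ² operator norm) of a square real matrix. -/
def specNorm {m : Type*} [Fintype m] [DecidableEq m] (A : Matrix m m ℝ) : ℝ :=
  ‖Matrix.toEuclideanCLM (𝕜 := ℝ) A‖

/-- Squared Frobenius norm. -/
def frobSq {m k : ℕ} (M : Matrix (Fin m) (Fin k) ℝ) : ℝ :=
  ∑ a, ∑ b, (M a b) ^ 2

/-!
Let `C = L - ½ SymBlockDiag (L SᵀS + SᵀS L)` (`certMat`). For every `Z` with identity diagonal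
blocks, `tr (C Z) = tr (L Z) - f(S)`, so `S` solves the SDP, and a fortiori the rank-restricted
problem, once `zᵀ C z ≥ 0` for all `z`.

Since `rank S < p`, some unit vector `v` is orthogonal to all columns of `S`. Given `z`, rotate
each block `S_i` in the plane of `S_i ẑ_i` and `v` (with `ẑ_i = z_i / |z_i|`) at angular speed
`|z_i|`. This curve stays in `St(d,p)^n`, has velocity `v zᵀ` and acceleration
`-S · SymBlockDiag (z zᵀ)` at `t = 0`, and the second derivative of `f` along it is exactly
`2 zᵀ C z`, which is nonnegative by second-order criticality.
-/

section MatrixFacts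

variable {ι κ : Type*} [Fintype ι] [Fintype κ]

lemma trace_mul_vecMulVec_self (A : Matrix ι ι ℝ) (z : ι → ℝ) :
    (A * vecMulVec z z).trace = z ⬝ᵥ A *ᵥ z := by
  rw [mul_vecMulVec, trace_vecMulVec, dotProduct_comm]

lemma trace_mul_nonneg_of_posSemidef {C Z : Matrix ι ι ℝ} (hC : ∀ z, 0 ≤ z ⬝ᵥ C *ᵥ z)
    (hZ : Z.PosSemidef) : 0 ≤ (C * Z).trace := by
  obtain ⟨k, w, rfl⟩ := Matrix.posSemidef_iff_eq_sum_vecMulVec.mp hZ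
  simp only [star_trivial, Matrix.mul_sum, trace_sum, trace_mul_vecMulVec_self]
  exact Finset.sum_nonneg fun i _ => hC (w i)

lemma exists_ne_zero_vecMul_eq_zero_of_rank_lt {K : Type*} [Field K] {p : ℕ}
    {S : Matrix (Fin p) κ K} (h : S.rank < p) : ∃ v ≠ 0, v ᵥ* S = 0 := by
  by_contra! hv
  have hinj : Function.Injective Sᵀ.mulVecLin := by
    rw [← LinearMap.ker_eq_bot, Submodule.eq_bot_iff]
    intro w hw
    by_contra hw0
    exact hv w hw0 (by simpa [mulVec_transpose] using hw)
  have := LinearMap.finrank_range_of_inj hinj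
  rw [← Matrix.rank, rank_transpose] at this
  simp only [Module.finrank_fintype_fun_eq_card, Fintype.card_fin] at this
  omega

lemma exists_unit_vecMul_eq_zero_of_rank_lt {p : ℕ} {S : Matrix (Fin p) κ ℝ} (h : S.rank < p) :
    ∃ v, v ⬝ᵥ v = 1 ∧ v ᵥ* S = 0 := by
  obtain ⟨w, hw0, hw⟩ := exists_ne_zero_vecMul_eq_zero_of_rank_lt h
  have hpos : 0 < w ⬝ᵥ w :=
    (Finset.sum_nonneg fun i _ => mul_self_nonneg (w i)).lt_of_ne'
      (dotProduct_self_eq_zero.not.mpr hw0)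
  refine ⟨(√(w ⬝ᵥ w))⁻¹ • w, ?_, by rw [smul_vecMul, hw, smul_zero]⟩
  rw [smul_dotProduct, dotProduct_smul, smul_eq_mul, smul_eq_mul, ← mul_assoc, ← mul_inv,
    Real.mul_self_sqrt hpos.le, inv_mul_cancel₀ hpos.ne']

lemma transpose_mul_self_add_vecMulVec [DecidableEq κ] {Y : Matrix ι κ ℝ} (hY : Yᵀ * Y = 1)
    {v : ι → ℝ} (hv : v ᵥ* Y = 0) (hvv : v ⬝ᵥ v = 1) (u : κ → ℝ) (α β : ℝ) :
    (Y + α • vecMulVec (Y *ᵥ u) u + β • vecMulVec v u)ᵀ *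
        (Y + α • vecMulVec (Y *ᵥ u) u + β • vecMulVec v u) =
      1 + (2 * α + α ^ 2 * (u ⬝ᵥ u) + β ^ 2) • vecMulVec u u := by
  have hYu : (Y *ᵥ u) ᵥ* Y = u := by rw [← mulVec_transpose, mulVec_mulVec, hY, one_mulVec]
  have hYv : Yᵀ *ᵥ v = 0 := by rw [mulVec_transpose, hv]
  have hvYu : v ⬝ᵥ Y *ᵥ u = 0 := by rw [dotProduct_mulVec, hv, zero_dotProduct]
  simp only [transpose_add, transpose_smul, transpose_vecMulVec, Matrix.add_mul, Matrix.mul_add,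
    Matrix.smul_mul, Matrix.mul_smul]
  simp only [mul_vecMulVec, mulVec_mulVec, hY, one_mulVec, hYv, vecMulVec_mulVec, op_smul_eq_smul,
    smul_vecMulVec, zero_mulVec, zero_vecMulVec, hvYu, dotProduct_comm _ v, hvv, vecMulVec_mul,
    hYu, hv, vecMulVec_zero]
  module

end MatrixFacts

section SecondVariation

variable {ι κ : Type*} [Fintype ι] [Fintype κ]

lemma trace_mul_transpose_mul_eq_sum (L : Matrix κ κ ℝ) (M N : Matrix ι κ ℝ) :
    (L * (Mᵀ * N)).trace = ∑ x, ∑ y, ∑ a, L x y * (M a y * N a x) := by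
  simp only [trace, diag_apply, mul_apply, transpose_apply, Finset.mul_sum]

lemma hasDerivAt_trace_mul_transpose_mul (L : Matrix κ κ ℝ) {M N : ℝ → Matrix ι κ ℝ}
    {M' N' : Matrix ι κ ℝ} {t : ℝ} (hM : ∀ a x, HasDerivAt (fun s => M s a x) (M' a x) t)
    (hN : ∀ a x, HasDerivAt (fun s => N s a x) (N' a x) t) :
    HasDerivAt (fun s => (L * ((M s)ᵀ * N s)).trace)
      ((L * (M'ᵀ * N t)).trace + (L * ((M t)ᵀ * N')).trace) t := by
  simp only [trace_mul_transpose_mul_eq_sum, ← Finset.sum_add_distrib, ← mul_add]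
  exact HasDerivAt.fun_sum fun x _ => HasDerivAt.fun_sum fun y _ => HasDerivAt.fun_sum
    fun a _ => ((hM a y).mul (hN a x)).const_mul (L x y)

lemma iteratedDeriv_two_trace_mul_transpose_mul_self (L : Matrix κ κ ℝ) {γ γ' : ℝ → Matrix ι κ ℝ}
    {γ'' : Matrix ι κ ℝ} (h1 : ∀ t a x, HasDerivAt (fun s => γ s a x) (γ' t a x) t)
    (h2 : ∀ a x, HasDerivAt (fun s => γ' s a x) (γ'' a x) 0) :
    iteratedDeriv 2 (fun t => (L * ((γ t)ᵀ * γ t)).trace) 0 =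
      (L * (γ''ᵀ * γ 0 + (2 : ℝ) • ((γ' 0)ᵀ * γ' 0) + (γ 0)ᵀ * γ'')).trace := by
  have hderiv : deriv (fun t => (L * ((γ t)ᵀ * γ t)).trace) =
      fun t => (L * ((γ' t)ᵀ * γ t)).trace + (L * ((γ t)ᵀ * γ' t)).trace :=
    funext fun t => (hasDerivAt_trace_mul_transpose_mul L (h1 t) (h1 t)).deriv
  have h := (hasDerivAt_trace_mul_transpose_mul L h2 (h1 0)).fun_add
    (hasDerivAt_trace_mul_transpose_mul L (h1 0) h2)
  rw [iteratedDeriv_succ, iteratedDeriv_one, hderiv, h.deriv]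
  simp only [Matrix.mul_add, trace_add, Matrix.mul_smul, trace_smul, smul_eq_mul]
  ring

end SecondVariation

section TrigComb

variable {ι κ : Type*} [Fintype κ] [DecidableEq κ]

def trigComb (ω : κ → ℝ) (P Q R : Matrix ι κ ℝ) (t : ℝ) : Matrix ι κ ℝ :=
  P + Q * diagonal (fun x => Real.cos (t * ω x)) + R * diagonal (fun x => Real.sin (t * ω x))

lemma trigComb_zero (ω : κ → ℝ) (P Q R : Matrix ι κ ℝ) : trigComb ω P Q R 0 = P + Q := by
  simp [trigComb]

lemma hasDerivAt_trigComb (ω : κ → ℝ) (P Q R : Matrix ι κ ℝ) (t : ℝ) (a : ι) (x : κ) :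
    HasDerivAt (fun s => trigComb ω P Q R s a x)
      (trigComb ω 0 (R * diagonal ω) (-(Q * diagonal ω)) t a x) t := by
  have hθ : HasDerivAt (fun s => s * ω x) (ω x) t := hasDerivAt_mul_const (ω x)
  have hfun : (fun s => trigComb ω P Q R s a x) =
      fun s => P a x + (Q a x * Real.cos (s * ω x) + R a x * Real.sin (s * ω x)) := by
    funext s
    simp only [trigComb, Matrix.add_apply, mul_diagonal]
    ring
  rw [hfun]
  refine (((hθ.cos.const_mul _).fun_add (hθ.sin.const_mul _)).const_add _).congr_deriv ?_
  simp only [trigComb, Matrix.add_apply, mul_diagonal, Matrix.zero_apply, Matrix.neg_apply]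
  ring

lemma contDiff_trigComb (ω : κ → ℝ) (P Q R : Matrix ι κ ℝ) (a : ι) (x : κ) {k : ℕ∞} :
    ContDiff ℝ k fun t => trigComb ω P Q R t a x := by
  simp only [trigComb, Matrix.add_apply, mul_diagonal]
  fun_prop

end TrigComb

section BlockDiagonal

variable {n d p : ℕ}

lemma transpose_symBlockDiag (A : Matrix (Fin n × Fin d) (Fin n × Fin d) ℝ) :
    (symBlockDiag A)ᵀ = symBlockDiag Aᵀ := by
  ext x y
  simp only [transpose_apply, symBlockDiag, eq_comm]

lemma trace_symBlockDiag_mul (A B : Matrix (Fin n × Fin d) (Fin n × Fin d) ℝ) :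
    (symBlockDiag A * B).trace = (A * symBlockDiag B).trace := by
  simp only [trace, diag_apply, mul_apply, symBlockDiag, ite_mul, mul_ite, zero_mul, mul_zero,
    eq_comm]

lemma symBlockDiag_eq_one {Z : Matrix (Fin n × Fin d) (Fin n × Fin d) ℝ}
    (hZ : ∀ (i : Fin n) (a b : Fin d), Z (i, a) (i, b) = if a = b then (1 : ℝ) else 0) :
    symBlockDiag Z = 1 := by
  ext ⟨i, a⟩ ⟨j, b⟩
  by_cases hij : i = j
  · subst hij
    simp [symBlockDiag, hZ, one_apply]
  · simp [symBlockDiag, hij, one_apply]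

lemma trace_certMat_mul (L : Matrix (Fin n × Fin d) (Fin n × Fin d) ℝ)
    (S : Matrix (Fin p) (Fin n × Fin d) ℝ) {Z : Matrix (Fin n × Fin d) (Fin n × Fin d) ℝ}
    (hZ : ∀ (i : Fin n) (a b : Fin d), Z (i, a) (i, b) = if a = b then (1 : ℝ) else 0) :
    (certMat L S * Z).trace = (L * Z).trace - fObj L S := by
  rw [certMat, Matrix.sub_mul, trace_sub, Matrix.smul_mul, trace_smul, trace_symBlockDiag_mul,
    symBlockDiag_eq_one hZ, Matrix.mul_one, trace_add, trace_mul_comm (Sᵀ * S), fObj, smul_eq_mul]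
  ring

lemma two_mul_dotProduct_certMat_mulVec (L : Matrix (Fin n × Fin d) (Fin n × Fin d) ℝ)
    (S : Matrix (Fin p) (Fin n × Fin d) ℝ) (z : Fin n × Fin d → ℝ) :
    2 * (z ⬝ᵥ certMat L S *ᵥ z) =
      (L * ((2 : ℝ) • vecMulVec z z - symBlockDiag (vecMulVec z z) * (Sᵀ * S) -
        (Sᵀ * S) * symBlockDiag (vecMulVec z z))).trace := by
  set B := symBlockDiag (vecMulVec z z)
  have hcycle : (Sᵀ * S * L * B).trace = (L * (B * (Sᵀ * S))).trace := by
    rw [Matrix.mul_assoc, trace_mul_comm, Matrix.mul_assoc]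
  rw [← trace_mul_vecMulVec_self, certMat, Matrix.sub_mul, trace_sub, Matrix.smul_mul, trace_smul,
    trace_symBlockDiag_mul, Matrix.mul_sub, Matrix.mul_sub, trace_sub, trace_sub, Matrix.mul_smul,
    trace_smul, Matrix.add_mul, trace_add, hcycle, ← Matrix.mul_assoc L (Sᵀ * S), smul_eq_mul,
    smul_eq_mul]
  ring

lemma sdpFeasible_transpose_mul_self {S : Matrix (Fin p) (Fin n × Fin d) ℝ} (hS : StProdFeas S) :
    SDPFeasible (Sᵀ * S) :=
  ⟨posSemidef_conjTranspose_mul_self S, fun i a b => by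
    simpa [blockCol, mul_apply, one_apply] using congrFun (congrFun (hS i) a) b⟩

end BlockDiagonal

section RotationCurve

variable {n d p : ℕ}

def vecBlock (w : Fin n × Fin d → ℝ) (i : Fin n) : Fin d → ℝ := fun b => w (i, b)

def blockNorm (z : Fin n × Fin d → ℝ) (i : Fin n) : ℝ := √(vecBlock z i ⬝ᵥ vecBlock z i)

-- A zero block stays zero (`z x / 0 = 0`); its rotation below is then the identity.
def blockNormalize (z : Fin n × Fin d → ℝ) : Fin n × Fin d → ℝ := fun x => z x / blockNorm z x.1

lemma vecBlock_eq_zero_of_blockNorm_eq_zero {z : Fin n × Fin d → ℝ} {i : Fin n}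
    (h : blockNorm z i = 0) : vecBlock z i = 0 := by
  have hnn : 0 ≤ vecBlock z i ⬝ᵥ vecBlock z i := Finset.sum_nonneg fun b _ => mul_self_nonneg _
  rwa [blockNorm, Real.sqrt_eq_zero hnn, dotProduct_self_eq_zero] at h

lemma blockNorm_mul_blockNormalize (z : Fin n × Fin d → ℝ) (x : Fin n × Fin d) :
    blockNorm z x.1 * blockNormalize z x = z x := by
  by_cases h : blockNorm z x.1 = 0
  · simpa [blockNormalize, h, vecBlock] using
      (congrFun (vecBlock_eq_zero_of_blockNorm_eq_zero h) x.2).symm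
  · exact mul_div_cancel₀ _ h

lemma dotProduct_vecBlock_blockNormalize (z : Fin n × Fin d → ℝ) (i : Fin n) :
    vecBlock (blockNormalize z) i ⬝ᵥ vecBlock (blockNormalize z) i = 1 ∨
      vecBlock (blockNormalize z) i = 0 := by
  have hu : vecBlock (blockNormalize z) i = (blockNorm z i)⁻¹ • vecBlock z i := by
    ext b
    simp [vecBlock, blockNormalize, div_eq_inv_mul]
  by_cases h : blockNorm z i = 0
  · right
    simp [hu, h]
  · left
    have hsq : blockNorm z i ^ 2 = vecBlock z i ⬝ᵥ vecBlock z i :=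
      Real.sq_sqrt (Finset.sum_nonneg fun b _ => mul_self_nonneg _)
    rw [hu, smul_dotProduct, dotProduct_smul, ← hsq, smul_eq_mul, smul_eq_mul]
    field_simp

lemma blockCol_mul_symBlockDiag_vecMulVec (S : Matrix (Fin p) (Fin n × Fin d) ℝ)
    (w : Fin n × Fin d → ℝ) (i : Fin n) :
    blockCol (S * symBlockDiag (vecMulVec w w)) i =
      vecMulVec (blockCol S i *ᵥ vecBlock w i) (vecBlock w i) := by
  ext a b
  simp only [blockCol, mul_apply, symBlockDiag, vecMulVec_apply, mulVec, dotProduct, vecBlock,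
    Fintype.sum_prod_type, Finset.sum_mul]
  rw [Finset.sum_eq_single i (fun j _ hj => by simp [hj]) (by simp)]
  simp only [if_true]
  exact Finset.sum_congr rfl fun c _ => by ring

/-- Block `i` is `exp (t |z_i| (v uᵀ - u vᵀ)) S_i` with `u = S_i ẑ_i`, written out with `cos` and
`sin` (using `S_iᵀ v = 0` and `|u| = |v| = 1`). -/
def rotationCurve (S : Matrix (Fin p) (Fin n × Fin d) ℝ) (v : Fin p → ℝ)
    (z : Fin n × Fin d → ℝ) : ℝ → Matrix (Fin p) (Fin n × Fin d) ℝ :=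
  trigComb (fun x => blockNorm z x.1)
    (S - S * symBlockDiag (vecMulVec (blockNormalize z) (blockNormalize z)))
    (S * symBlockDiag (vecMulVec (blockNormalize z) (blockNormalize z)))
    (vecMulVec v (blockNormalize z))

lemma blockCol_rotationCurve (S : Matrix (Fin p) (Fin n × Fin d) ℝ) (v : Fin p → ℝ)
    (z : Fin n × Fin d → ℝ) (t : ℝ) (i : Fin n) :
    blockCol (rotationCurve S v z t) i =
      blockCol S i + (Real.cos (t * blockNorm z i) - 1) •
        vecMulVec (blockCol S i *ᵥ vecBlock (blockNormalize z) i) (vecBlock (blockNormalize z) i) +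
        Real.sin (t * blockNorm z i) • vecMulVec v (vecBlock (blockNormalize z) i) := by
  rw [← blockCol_mul_symBlockDiag_vecMulVec]
  ext a b
  simp only [rotationCurve, trigComb, blockCol, Matrix.add_apply, Matrix.sub_apply, mul_diagonal,
    Matrix.smul_apply, smul_eq_mul, vecMulVec_apply, vecBlock]
  ring

lemma stProdFeas_rotationCurve {S : Matrix (Fin p) (Fin n × Fin d) ℝ} (hS : StProdFeas S)
    {v : Fin p → ℝ} (hv : v ᵥ* S = 0) (hvv : v ⬝ᵥ v = 1) (z : Fin n × Fin d → ℝ) (t : ℝ) :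
    StProdFeas (rotationCurve S v z t) := by
  intro i
  have hvY : v ᵥ* blockCol S i = 0 := funext fun b => congrFun hv (i, b)
  change (blockCol _ i)ᵀ * blockCol _ i = 1
  rw [blockCol_rotationCurve, transpose_mul_self_add_vecMulVec (hS i) hvY hvv]
  set θ := t * blockNorm z i
  rcases dotProduct_vecBlock_blockNormalize z i with hu | hu
  · have hcoef : 2 * (Real.cos θ - 1) + (Real.cos θ - 1) ^ 2 * 1 + Real.sin θ ^ 2 = 0 := by
      linear_combination Real.sin_sq_add_cos_sq θ
    rw [hu, hcoef, zero_smul, add_zero]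
  · simp [hu]

lemma vecMulVec_blockNormalize_mul_diagonal (v : Fin p → ℝ) (z : Fin n × Fin d → ℝ) :
    vecMulVec v (blockNormalize z) * diagonal (fun x : Fin n × Fin d => blockNorm z x.1) =
      vecMulVec v z := by
  ext a x
  rw [mul_diagonal, vecMulVec_apply, vecMulVec_apply, mul_assoc, mul_comm (blockNormalize z x),
    blockNorm_mul_blockNormalize]

lemma symBlockDiag_blockNormalize_mul_diagonal (z : Fin n × Fin d → ℝ) :
    symBlockDiag (vecMulVec (blockNormalize z) (blockNormalize z)) *
        (diagonal (fun x : Fin n × Fin d => blockNorm z x.1) *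
          diagonal (fun x : Fin n × Fin d => blockNorm z x.1)) =
      symBlockDiag (vecMulVec z z) := by
  ext x y
  simp only [diagonal_mul_diagonal, mul_diagonal, symBlockDiag, vecMulVec_apply]
  split_ifs with h
  · rw [← blockNorm_mul_blockNormalize z x, ← blockNorm_mul_blockNormalize z y, h]
    ring
  · simp

lemma iteratedDeriv_two_fObj_rotationCurve (L : Matrix (Fin n × Fin d) (Fin n × Fin d) ℝ)
    (S : Matrix (Fin p) (Fin n × Fin d) ℝ) {v : Fin p → ℝ} (hvv : v ⬝ᵥ v = 1)
    (z : Fin n × Fin d → ℝ) :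
    iteratedDeriv 2 (fun t => fObj L (rotationCurve S v z t)) 0 =
      2 * (z ⬝ᵥ certMat L S *ᵥ z) := by
  rw [two_mul_dotProduct_certMat_mulVec]
  refine (iteratedDeriv_two_trace_mul_transpose_mul_self L (hasDerivAt_trigComb _ _ _ _)
    (hasDerivAt_trigComb _ _ _ _ 0)).trans ?_
  simp only [trigComb_zero, zero_add, sub_add_cancel, vecMulVec_blockNormalize_mul_diagonal,
    Matrix.neg_mul, Matrix.mul_assoc, symBlockDiag_blockNormalize_mul_diagonal, transpose_neg,
    transpose_mul, transpose_symBlockDiag, transpose_vecMulVec, vecMulVec_mul_vecMulVec, hvv,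
    one_smul]
  rw [Matrix.mul_neg]
  abel_nf

end RotationCurve

lemma dotProduct_certMat_mulVec_nonneg {n d p : ℕ} {L : Matrix (Fin n × Fin d) (Fin n × Fin d) ℝ}
    {S : Matrix (Fin p) (Fin n × Fin d) ℝ} (hS : StProdFeas S)
    (hcrit : IsSecondOrderCriticalSt L S) (hrank : S.rank < p) (z : Fin n × Fin d → ℝ) :
    0 ≤ z ⬝ᵥ certMat L S *ᵥ z := by
  obtain ⟨v, hvv, hv⟩ := exists_unit_vecMul_eq_zero_of_rank_lt hrank
  have h := hcrit.2 (rotationCurve S v z) (fun a x => contDiff_trigComb _ _ _ _ a x)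
    (stProdFeas_rotationCurve hS hv hvv z) (by rw [rotationCurve, trigComb_zero, sub_add_cancel])
  rw [iteratedDeriv_two_fObj_rotationCurve L S hvv z] at h
  linarith

lemma fObj_le_trace_mul_of_isSecondOrderCriticalSt {n d p : ℕ}
    {L : Matrix (Fin n × Fin d) (Fin n × Fin d) ℝ} {S : Matrix (Fin p) (Fin n × Fin d) ℝ}
    (hS : StProdFeas S) (hcrit : IsSecondOrderCriticalSt L S) (hrank : S.rank < p)
    {Z : Matrix (Fin n × Fin d) (Fin n × Fin d) ℝ} (hZ : SDPFeasible Z) :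
    fObj L S ≤ (L * Z).trace := by
  have hcert := trace_certMat_mul L S hZ.2
  have hnonneg :=
    trace_mul_nonneg_of_posSemidef (dotProduct_certMat_mulVec_nonneg hS hcrit hrank) hZ.1
  linarith

theorem statement3_general {n d p : ℕ}
    (E : Finset (Fin n × Fin n))
    (κ : Fin n × Fin n → ℝ)
    (Rbar : Fin n × Fin n → Matrix (Fin d) (Fin d) ℝ)
    (Sstar : Matrix (Fin p) (Fin n × Fin d) ℝ) (hfeas : StProdFeas Sstar)
    (hcrit : IsSecondOrderCriticalSt (connLap E κ Rbar) Sstar)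
    (hrank : Sstar.rank < p) :
    (∀ S : Matrix (Fin p) (Fin n × Fin d) ℝ, StProdFeas S →
      fObj (connLap E κ Rbar) Sstar ≤ fObj (connLap E κ Rbar) S) ∧
    SDPFeasible (Sstarᵀ * Sstar) ∧
    ∀ Z, SDPFeasible Z →
      (connLap E κ Rbar * (Sstarᵀ * Sstar)).trace ≤ (connLap E κ Rbar * Z).trace :=
  ⟨fun _ hS => fObj_le_trace_mul_of_isSecondOrderCriticalSt hfeas hcrit hrank
      (sdpFeasible_transpose_mul_self hS),
    sdpFeasible_transpose_mul_self hfeas,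
    fun _ hZ => fObj_le_trace_mul_of_isSecondOrderCriticalSt hfeas hcrit hrank hZ⟩

/-- A rank-deficient second-order critical point of the rank-restricted problem
is a global minimizer, and `S*ᵀS*` solves the SDP. -/
theorem statement3 {n d p : ℕ} (hn : 1 ≤ n) (hd : 1 ≤ d) (hdp : d ≤ p)
    (E : Finset (Fin n × Fin n)) (hE : ∀ e ∈ E, e.1 < e.2)
    (κ : Fin n × Fin n → ℝ) (hκ : ∀ e ∈ E, 0 ≤ κ e)
    (Rbar : Fin n × Fin n → Matrix (Fin d) (Fin d) ℝ)
    (hRbar : ∀ e ∈ E, Rbar e ∈ SOset d)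
    (Sstar : Matrix (Fin p) (Fin n × Fin d) ℝ) (hfeas : StProdFeas Sstar)
    (hcrit : IsSecondOrderCriticalSt (connLap E κ Rbar) Sstar)
    (hrank : Sstar.rank < p) :
    (∀ S : Matrix (Fin p) (Fin n × Fin d) ℝ, StProdFeas S →
      fObj (connLap E κ Rbar) Sstar ≤ fObj (connLap E κ Rbar) S) ∧
    SDPFeasible (Sstarᵀ * Sstar) ∧
    ∀ Z, SDPFeasible Z →
      (connLap E κ Rbar * (Sstarᵀ * Sstar)).trace ≤ (connLap E κ Rbar * Z).trace :=
  statement3_general E κ Rbar Sstar hfeas hcrit hrank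
end
end

section
/- Let p > d. Then the rank-restricted problem and the Shonan Averaging problem attain the same optimal value: the infimum of g(Q) = trace(L̄·Π(Q)ᵀ·Π(Q)) over Q ∈ SO(p)^n equals the infimum of f(S) = trace(L̄·SᵀS) over S ∈ St(d,p)^n. -/
open Matrix BigOperators

noncomputable section

/-! The two sets of objective values coincide because `π : SO(p) → St(d,p)` is onto: the
columns of `Y ∈ St(d,p)` extend to an orthonormal basis of `ℝᵖ`, and since `p > d` there is a
column beyond the first `d` whose sign can be flipped to make the determinant `1`. -/

lemma Pmat_eq_of_castLE {d p : ℕ} (hdp : d ≤ p) :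
    Pmat d p = of fun a b => if a = Fin.castLE hdp b then 1 else 0 := by
  ext a b
  simp only [Pmat, of_apply, Fin.ext_iff, Fin.val_castLE]

lemma mul_Pmat_apply {d p : ℕ} (hdp : d ≤ p) (Q : Matrix (Fin p) (Fin p) ℝ)
    (a : Fin p) (b : Fin d) : (Q * Pmat d p) a b = Q a (Fin.castLE hdp b) := by
  simp [Pmat_eq_of_castLE hdp, mul_apply]

lemma Pmat_transpose_mul_self {d p : ℕ} (hdp : d ≤ p) : (Pmat d p)ᵀ * Pmat d p = 1 := by
  ext b b'
  simp [Pmat_eq_of_castLE hdp, mul_apply, one_apply, eq_comm]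

lemma mul_Pmat_mem_StiefelSet {d p : ℕ} (hdp : d ≤ p) {Q : Matrix (Fin p) (Fin p) ℝ}
    (hQ : Qᵀ * Q = 1) : Q * Pmat d p ∈ StiefelSet d p := by
  change (Q * Pmat d p)ᵀ * (Q * Pmat d p) = 1
  rw [transpose_mul, Matrix.mul_assoc, ← Matrix.mul_assoc Qᵀ, hQ, Matrix.one_mul,
    Pmat_transpose_mul_self hdp]

lemma OrthonormalBasis.transpose_mul_self_columnMatrix {p : ℕ}
    (b : OrthonormalBasis (Fin p) ℝ (EuclideanSpace ℝ (Fin p))) :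
    (of fun a c => b c a)ᵀ * (of fun a c => b c a) = 1 := by
  have hb := (EuclideanSpace.basisFun (Fin p) ℝ).toMatrix_orthonormalBasis_mem_unitary b
  rw [mem_unitaryGroup_iff', star_eq_conjTranspose, conjTranspose_eq_transpose_of_trivial] at hb
  exact hb

lemma exists_orthogonal_mul_Pmat_eq {d p : ℕ} (hdp : d ≤ p) {S : Matrix (Fin p) (Fin d) ℝ}
    (hS : S ∈ StiefelSet d p) : ∃ Q : Matrix (Fin p) (Fin p) ℝ, Qᵀ * Q = 1 ∧ Q * Pmat d p = S := by
  set v : Fin p → EuclideanSpace ℝ (Fin p) := fun j =>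
    if h : (j : ℕ) < d then WithLp.toLp 2 (fun a => S a ⟨j, h⟩) else 0
  set s : Set (Fin p) := {j | (j : ℕ) < d}
  have hortho : Orthonormal ℝ (s.domRestrict v) := by
    rw [orthonormal_iff_ite]
    rintro ⟨i, hi : (i : ℕ) < d⟩ ⟨j, hj : (j : ℕ) < d⟩
    have hS' := congrFun (congrFun hS ⟨i, hi⟩) ⟨j, hj⟩
    simp only [mul_apply, transpose_apply, one_apply, Fin.ext_iff] at hS'
    simp [Set.domRestrict, v, hi, hj, PiLp.inner_apply, mul_comm, hS', Fin.val_inj]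
  obtain ⟨b, hb⟩ := hortho.exists_orthonormalBasis_extension_of_card_eq (by simp)
  refine ⟨of fun a c => b c a, b.transpose_mul_self_columnMatrix, ?_⟩
  ext a c
  have hc : ((Fin.castLE hdp c : Fin p) : ℕ) < d := c.2
  rw [mul_Pmat_apply hdp, of_apply, hb _ hc]
  simp [v]

section Reflection

variable {ι : Type*} [Fintype ι] [DecidableEq ι]

lemma det_diagonal_update_one_neg_one (c : ι) :
    (diagonal (Function.update (1 : ι → ℝ) c (-1))).det = -1 := by
  rw [det_diagonal, Finset.prod_update_of_mem (Finset.mem_univ c)]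
  simp

lemma diagonal_update_one_neg_one_transpose_mul_self (c : ι) :
    (diagonal (Function.update (1 : ι → ℝ) c (-1)))ᵀ *
      diagonal (Function.update (1 : ι → ℝ) c (-1)) = 1 := by
  rw [diagonal_transpose, diagonal_mul_diagonal, ← diagonal_one]
  congr 1
  ext a
  rcases eq_or_ne a c with rfl | h <;> simp [*]

end Reflection

lemma diagonal_update_one_neg_one_mul_Pmat {d p : ℕ} (hdp : d < p) :
    diagonal (Function.update (1 : Fin p → ℝ) ⟨d, hdp⟩ (-1)) * Pmat d p = Pmat d p := by
  ext a b
  rw [diagonal_mul]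
  rcases eq_or_ne a ⟨d, hdp⟩ with rfl | h
  · simp [Pmat, b.isLt.ne']
  · simp [h]

/-- If `Q` has determinant `-1`, flipping its column `d` (unseen by `P`) fixes the sign. -/
lemma exists_SO_mul_Pmat_eq {d p : ℕ} (hdp : d < p) {S : Matrix (Fin p) (Fin d) ℝ}
    (hS : S ∈ StiefelSet d p) : ∃ Q ∈ SOset p, Q * Pmat d p = S := by
  obtain ⟨Q, hQ, hQS⟩ := exists_orthogonal_mul_Pmat_eq hdp.le hS
  have hdet : Q.det * Q.det = 1 := by
    simpa [det_transpose] using congrArg det hQ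
  rcases mul_self_eq_one_iff.1 hdet with hdet | hdet
  · exact ⟨Q, ⟨hQ, hdet⟩, hQS⟩
  · set D := diagonal (Function.update (1 : Fin p → ℝ) ⟨d, hdp⟩ (-1))
    refine ⟨Q * D, ⟨?_, ?_⟩, ?_⟩
    · rw [transpose_mul, Matrix.mul_assoc, ← Matrix.mul_assoc Qᵀ, hQ, Matrix.one_mul,
        diagonal_update_one_neg_one_transpose_mul_self]
    · rw [det_mul, hdet, det_diagonal_update_one_neg_one, neg_mul_neg, one_mul]
    · rw [Matrix.mul_assoc, diagonal_update_one_neg_one_mul_Pmat, hQS]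

lemma StProdFeas_bigProj {n d p : ℕ} (hdp : d ≤ p) {Q : Fin n → Matrix (Fin p) (Fin p) ℝ}
    (hQ : ∀ i, Q i ∈ SOset p) : StProdFeas (bigProj (d := d) Q) :=
  fun i => mul_Pmat_mem_StiefelSet hdp (hQ i).1

lemma exists_bigProj_eq {n d p : ℕ} (hdp : d < p) {S : Matrix (Fin p) (Fin n × Fin d) ℝ}
    (hS : StProdFeas S) : ∃ Q : Fin n → Matrix (Fin p) (Fin p) ℝ,
      (∀ i, Q i ∈ SOset p) ∧ bigProj Q = S := by
  choose Q hQ hQS using fun i => exists_SO_mul_Pmat_eq hdp (hS i)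
  exact ⟨Q, hQ, funext fun a => funext fun ib => congrFun (congrFun (hQS ib.1) a) ib.2⟩

theorem statement6_general {n d p : ℕ} (hdp : d < p)
    (E : Finset (Fin n × Fin n))
    (κ : Fin n × Fin n → ℝ)
    (Rbar : Fin n × Fin n → Matrix (Fin d) (Fin d) ℝ) :
    sInf {x : ℝ | ∃ Q : Fin n → Matrix (Fin p) (Fin p) ℝ, (∀ i, Q i ∈ SOset p) ∧
        x = fObj (connLap E κ Rbar) (bigProj Q)} =
    sInf {x : ℝ | ∃ S : Matrix (Fin p) (Fin n × Fin d) ℝ, StProdFeas S ∧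
        x = fObj (connLap E κ Rbar) S} := by
  congr 1
  ext x
  constructor
  · rintro ⟨Q, hQ, rfl⟩
    exact ⟨bigProj Q, StProdFeas_bigProj hdp.le hQ, rfl⟩
  · rintro ⟨S, hS, rfl⟩
    obtain ⟨Q, hQ, rfl⟩ := exists_bigProj_eq hdp hS
    exact ⟨Q, hQ, rfl⟩

/-- For `p > d` the Shonan problem on `SO(p)^n` and the rank-restricted
problem on `St(d,p)^n` attain the same optimal value. -/
theorem statement6 {n d p : ℕ} (hn : 1 ≤ n) (hd : 1 ≤ d) (hdp : d < p)
    (E : Finset (Fin n × Fin n)) (hE : ∀ e ∈ E, e.1 < e.2)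
    (κ : Fin n × Fin n → ℝ) (hκ : ∀ e ∈ E, 0 ≤ κ e)
    (Rbar : Fin n × Fin n → Matrix (Fin d) (Fin d) ℝ)
    (hRbar : ∀ e ∈ E, Rbar e ∈ SOset d) :
    sInf {x : ℝ | ∃ Q : Fin n → Matrix (Fin p) (Fin p) ℝ, (∀ i, Q i ∈ SOset p) ∧
        x = fObj (connLap E κ Rbar) (bigProj Q)} =
    sInf {x : ℝ | ∃ S : Matrix (Fin p) (Fin n × Fin d) ℝ, StProdFeas S ∧
        x = fObj (connLap E κ Rbar) S} :=
  statement6_general hdp E κ Rbar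
end
end

section
/- Suppose the SDP has a minimizer Z* whose rank equals r, and let p ≥ r (note r ≥ d automatically, since every SDP-feasible matrix has rank at least d). Then every global minimizer S* of f(S) = trace(L̄·SᵀS) over St(d,p)^n satisfies f(S*) = f_SDP*, and Z = S*ᵀ·S* is a global minimizer of the SDP. -/
open Matrix BigOperators

noncomputable section

/-! A rank-`r` minimizer `Z*` of the SDP factors as `S₀ᵀ S₀` with `S₀` having `p ≥ r` rows, and the
identity diagonal blocks of `Z*` say exactly that `S₀ ∈ St(d,p)^n`. Hence a global minimizer `S` of
`f` has `f S ≤ f S₀ = tr (L Z*)`, while `SᵀS` is SDP-feasible, so `tr (L Z*) ≤ f S`. -/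

theorem Matrix.exists_transpose_mul_self_eq_of_card_support_le {R m n k : Type*} [CommSemiring R]
    [Fintype m] [Fintype k] (B : Matrix m n R) (s : Finset m) (hB : ∀ i ∉ s, B i = 0)
    (hs : s.card ≤ Fintype.card k) : ∃ C : Matrix k n R, Cᵀ * C = Bᵀ * B := by
  obtain ⟨φ⟩ : Nonempty (s ↪ k) := Function.Embedding.nonempty_of_card_le (by simpa using hs)
  refine ⟨Matrix.of (Function.extend φ (fun i => B i) 0), ?_⟩
  ext x y
  simp only [mul_apply, transpose_apply, of_apply]
  symm
  calc ∑ i, B i x * B i y = ∑ i : s, B i x * B i y :=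
        (Fintype.sum_of_injective _ Subtype.val_injective _ _
          (fun i hi => by simp [hB i (by simpa using hi)]) fun _ => rfl).symm
    _ = _ := Fintype.sum_of_injective φ φ.injective _ _
          (fun a ha => by simp [Function.extend_apply' _ _ _ ha])
          fun i => by simp [φ.injective.extend_apply]

theorem Matrix.PosSemidef.exists_transpose_mul_self_eq_of_rank_le {m k : Type*} [Fintype m]
    [DecidableEq m] [Fintype k] {Z : Matrix m m ℝ} (hZ : Z.PosSemidef)
    (hrank : Z.rank ≤ Fintype.card k) : ∃ S : Matrix k m ℝ, Sᵀ * S = Z := by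
  classical
  set ev := hZ.1.eigenvalues
  set U : Matrix m m ℝ := ↑hZ.1.eigenvectorUnitary
  -- `B = √D Uᵀ`; its rows at zero eigenvalues vanish.
  set B : Matrix m m ℝ := diagonal (fun i => √(ev i)) * star U
  have hBB : Bᵀ * B = Z := by
    conv_rhs => rw [hZ.1.spectral_theorem]
    simp only [B, transpose_mul, diagonal_transpose, Unitary.conjStarAlgAut_apply]
    rw [← conjTranspose_eq_transpose_of_trivial, star_eq_conjTranspose, conjTranspose_conjTranspose,
      mul_assoc, ← mul_assoc (diagonal _), diagonal_mul_diagonal, ← mul_assoc]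
    congr 3
    funext i
    simp [Real.mul_self_sqrt (hZ.eigenvalues_nonneg i), ev]
  obtain ⟨C, hC⟩ := B.exists_transpose_mul_self_eq_of_card_support_le (k := k) {i | ev i ≠ 0}
    (fun i hi => by ext x; simp_all [B, mul_apply, diagonal])
    (by rwa [← Fintype.card_subtype, ← hZ.1.rank_eq_card_non_zero_eigs])
  exact ⟨C, hC.trans hBB⟩

theorem transpose_blockCol_mul_blockCol {n d p : ℕ} (S : Matrix (Fin p) (Fin n × Fin d) ℝ)
    (i : Fin n) : (blockCol S i)ᵀ * blockCol S i = (Sᵀ * S).submatrix (Prod.mk i) (Prod.mk i) := by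
  ext a b
  simp [blockCol, mul_apply]

theorem sdpFeasible_transpose_mul_self_iff {n d p : ℕ} {S : Matrix (Fin p) (Fin n × Fin d) ℝ} :
    SDPFeasible (Sᵀ * S) ↔ StProdFeas S := by
  have hpsd : (Sᵀ * S).PosSemidef := by simpa using posSemidef_conjTranspose_mul_self S
  simp only [SDPFeasible, StProdFeas, StiefelSet, Set.mem_ofPred_eq, transpose_blockCol_mul_blockCol,
    hpsd, true_and, ← Matrix.ext_iff, submatrix_apply, one_apply]

theorem statement14_general {n d p r : ℕ}
    (E : Finset (Fin n × Fin n))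
    (κ : Fin n × Fin n → ℝ)
    (Rbar : Fin n × Fin n → Matrix (Fin d) (Fin d) ℝ)
    (Zstar : Matrix (Fin n × Fin d) (Fin n × Fin d) ℝ)
    (hfeas : SDPFeasible Zstar)
    (hopt : ∀ Z, SDPFeasible Z →
      (connLap E κ Rbar * Zstar).trace ≤ (connLap E κ Rbar * Z).trace)
    (hrank : Zstar.rank = r) (hpr : r ≤ p) :
    ∀ S : Matrix (Fin p) (Fin n × Fin d) ℝ, StProdFeas S →
      (∀ Sp : Matrix (Fin p) (Fin n × Fin d) ℝ, StProdFeas Sp →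
        fObj (connLap E κ Rbar) S ≤ fObj (connLap E κ Rbar) Sp) →
      fObj (connLap E κ Rbar) S =
        sInf {x : ℝ | ∃ Z, SDPFeasible Z ∧ x = (connLap E κ Rbar * Z).trace} ∧
      SDPFeasible (Sᵀ * S) ∧
      ∀ Z, SDPFeasible Z →
        (connLap E κ Rbar * (Sᵀ * S)).trace ≤ (connLap E κ Rbar * Z).trace := by
  intro S hS hmin
  set L := connLap E κ Rbar
  obtain ⟨S₀, hS₀⟩ := hfeas.1.exists_transpose_mul_self_eq_of_rank_le (k := Fin p)
    (by rwa [hrank, Fintype.card_fin])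
  have hS₀feas : StProdFeas S₀ := sdpFeasible_transpose_mul_self_iff.1 (hS₀ ▸ hfeas)
  have hSfeas : SDPFeasible (Sᵀ * S) := sdpFeasible_transpose_mul_self_iff.2 hS
  have hval : fObj L S = (L * Zstar).trace :=
    le_antisymm (hS₀ ▸ hmin S₀ hS₀feas) (hopt _ hSfeas)
  have hleast : IsLeast {x | ∃ Z, SDPFeasible Z ∧ x = (L * Z).trace} (L * Zstar).trace :=
    ⟨⟨Zstar, hfeas, rfl⟩, by rintro _ ⟨Z, hZ, rfl⟩; exact hopt Z hZ⟩
  exact ⟨hval.trans hleast.csInf_eq.symm, hSfeas, fun Z hZ => hval.trans_le (hopt Z hZ)⟩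

/-- If the SDP has a minimizer of rank `r` and `p ≥ r`, then every global
minimizer of the rank-restricted problem attains the SDP optimal value, and `SᵀS` solves the
SDP. -/
theorem statement14 {n d p r : ℕ} (hn : 1 ≤ n) (hd : 1 ≤ d)
    (E : Finset (Fin n × Fin n)) (hE : ∀ e ∈ E, e.1 < e.2)
    (κ : Fin n × Fin n → ℝ) (hκ : ∀ e ∈ E, 0 ≤ κ e)
    (Rbar : Fin n × Fin n → Matrix (Fin d) (Fin d) ℝ)
    (hRbar : ∀ e ∈ E, Rbar e ∈ SOset d)
    (Zstar : Matrix (Fin n × Fin d) (Fin n × Fin d) ℝ)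
    (hfeas : SDPFeasible Zstar)
    (hopt : ∀ Z, SDPFeasible Z →
      (connLap E κ Rbar * Zstar).trace ≤ (connLap E κ Rbar * Z).trace)
    (hrank : Zstar.rank = r) (hpr : r ≤ p) :
    ∀ S : Matrix (Fin p) (Fin n × Fin d) ℝ, StProdFeas S →
      (∀ Sp : Matrix (Fin p) (Fin n × Fin d) ℝ, StProdFeas Sp →
        fObj (connLap E κ Rbar) S ≤ fObj (connLap E κ Rbar) Sp) →
      fObj (connLap E κ Rbar) S =
        sInf {x : ℝ | ∃ Z, SDPFeasible Z ∧ x = (connLap E κ Rbar * Z).trace} ∧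
      SDPFeasible (Sᵀ * S) ∧
      ∀ Z, SDPFeasible Z →
        (connLap E κ Rbar * (Sᵀ * S)).trace ≤ (connLap E κ Rbar * Z).trace :=
  statement14_general E κ Rbar Zstar hfeas hopt hrank hpr
end
end
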